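/- Let u : ℝ × ℝ → ℝ be a smooth function, 2π-periodic in its second variable, not identically zero, such that u and all its partial derivatives up to second order are square-integrable against the weight e^{−y²/4} on ℝ × [0,2π]. If L u − (1/2)u = λ·u pointwise for some real λ > 0, then λ = 1/2 and u is a nonzero constant. In other words, the only unstable eigenfunction of the operator L' = L − 1/2 is the constant function 1, with eigenvalue 1/2. -/

import Mathlib

open Real MeasureTheory Set Function

noncomputable def D1 (f : ℝ × ℝ → ℝ) : ℝ × ℝ → ℝ := fun p => fderiv ℝ f p (1, 0)
noncomputable def D2 (f : ℝ × ℝ → ℝ) : ℝ × ℝ → ℝ := fun p => fderiv ℝ f p (0, 1)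

lemma contDiff_D1 {f : ℝ × ℝ → ℝ} (hf : ContDiff ℝ (⊤ : ℕ∞) f) : ContDiff ℝ (⊤ : ℕ∞) (D1 f) :=
  (hf.fderiv_right (by simp)).clm_apply contDiff_const

lemma contDiff_D2 {f : ℝ × ℝ → ℝ} (hf : ContDiff ℝ (⊤ : ℕ∞) f) : ContDiff ℝ (⊤ : ℕ∞) (D2 f) :=
  (hf.fderiv_right (by simp)).clm_apply contDiff_const

lemma hasDerivAt_slice1 {f : ℝ × ℝ → ℝ} (hf : ContDiff ℝ (⊤ : ℕ∞) f) (y θ : ℝ) :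
    HasDerivAt (fun s => f (s, θ)) (D1 f (y, θ)) y := by
  have hF : HasFDerivAt f (fderiv ℝ f (y, θ)) (y, θ) :=
    (hf.differentiable (by simp) (y, θ)).hasFDerivAt
  have hl : HasDerivAt (fun s : ℝ => (s, θ)) ((1 : ℝ), (0 : ℝ)) y :=
    (hasDerivAt_id y).prodMk (hasDerivAt_const y θ)
  exact hF.comp_hasDerivAt y hl

lemma hasDerivAt_slice2 {f : ℝ × ℝ → ℝ} (hf : ContDiff ℝ (⊤ : ℕ∞) f) (y θ : ℝ) :
    HasDerivAt (fun t => f (y, t)) (D2 f (y, θ)) θ := by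
  have hF : HasFDerivAt f (fderiv ℝ f (y, θ)) (y, θ) :=
    (hf.differentiable (by simp) (y, θ)).hasFDerivAt
  have hl : HasDerivAt (fun t : ℝ => (y, t)) ((0 : ℝ), (1 : ℝ)) θ :=
    (hasDerivAt_const θ y).prodMk (hasDerivAt_id θ)
  exact hF.comp_hasDerivAt θ hl

lemma deriv_slice1 {f : ℝ × ℝ → ℝ} (hf : ContDiff ℝ (⊤ : ℕ∞) f) (y θ : ℝ) :
    deriv (fun s => f (s, θ)) y = D1 f (y, θ) := (hasDerivAt_slice1 hf y θ).deriv

lemma deriv_slice2 {f : ℝ × ℝ → ℝ} (hf : ContDiff ℝ (⊤ : ℕ∞) f) (y θ : ℝ) :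
    deriv (fun t => f (y, t)) θ = D2 f (y, θ) := (hasDerivAt_slice2 hf y θ).deriv

lemma D_comm {f : ℝ × ℝ → ℝ} (hf : ContDiff ℝ (⊤ : ℕ∞) f) : D1 (D2 f) = D2 (D1 f) := by
  funext p
  have hDf : ContDiff ℝ (⊤ : ℕ∞) (fderiv ℝ f) := hf.fderiv_right (by simp)
  have hf'' : HasFDerivAt (fderiv ℝ f) (fderiv ℝ (fderiv ℝ f) p) p :=
    (hDf.differentiable (by simp) p).hasFDerivAt
  have hsymm := second_derivative_symmetric
    (fun q => (hf.differentiable (by simp) q).hasFDerivAt) hf''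
  have h2 : HasFDerivAt (D2 f)
      ((ContinuousLinearMap.apply ℝ ℝ ((0:ℝ),(1:ℝ))).comp (fderiv ℝ (fderiv ℝ f) p)) p :=
    (ContinuousLinearMap.apply ℝ ℝ ((0:ℝ),(1:ℝ))).hasFDerivAt.comp p hf''
  have h1 : HasFDerivAt (D1 f)
      ((ContinuousLinearMap.apply ℝ ℝ ((1:ℝ),(0:ℝ))).comp (fderiv ℝ (fderiv ℝ f) p)) p :=
    (ContinuousLinearMap.apply ℝ ℝ ((1:ℝ),(0:ℝ))).hasFDerivAt.comp p hf''
  have e1 : D1 (D2 f) p = fderiv ℝ (fderiv ℝ f) p (1, 0) (0, 1) := by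
    show fderiv ℝ (D2 f) p (1, 0) = _
    rw [h2.fderiv]; rfl
  have e2 : D2 (D1 f) p = fderiv ℝ (fderiv ℝ f) p (0, 1) (1, 0) := by
    show fderiv ℝ (D1 f) p (0, 1) = _
    rw [h1.fderiv]; rfl
  rw [e1, e2, hsymm]


lemma contDiff_top_deriv {f : ℝ → ℝ} (hf : ContDiff ℝ (⊤ : ℕ∞) f) : ContDiff ℝ (⊤ : ℕ∞) (deriv f) := by
  have h : deriv f = fun x => fderiv ℝ f x 1 := by funext x; rfl
  rw [h]
  exact (hf.fderiv_right (by simp)).clm_apply contDiff_const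

lemma periodic_deriv' {f : ℝ → ℝ} (T : ℝ) (hp : Periodic f T) : Periodic (deriv f) T := by
  intro x
  have h2 : deriv (fun y => f (y + T)) x = deriv f x := by
    have h1 : (fun y => f (y + T)) = f := funext fun y => hp y
    rw [h1]
  rw [← h2, deriv_comp_add_const]

lemma ode_zero {f : ℝ → ℝ} (hf : ContDiff ℝ (⊤ : ℕ∞) f) (hp : Periodic f (2 * π))
    (hode : ∀ x, deriv (deriv f) x = 0) : ∀ x, f x = f 0 := by
  have hdf : Differentiable ℝ (deriv f) := (contDiff_top_deriv hf).differentiable (by simp)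
  have hconst : ∀ x, deriv f x = deriv f 0 := fun x => is_const_of_deriv_eq_zero hdf hode x 0
  set a := deriv f 0 with ha
  have hg : ∀ x, deriv (fun x => f x - a * x) x = 0 := by
    intro x
    rw [deriv_fun_sub ((hf.differentiable (by simp)).differentiableAt) (by fun_prop)]
    rw [hconst x]
    have : deriv (fun x => a * x) x = a := by
      simpa using ((hasDerivAt_id x).const_mul a).deriv
    rw [this]; ring
  have hdg : Differentiable ℝ (fun x => f x - a * x) :=
    (hf.differentiable (by simp)).sub (by fun_prop)
  have hlin : ∀ x, f x - a * x = f 0 - a * 0 := fun x => is_const_of_deriv_eq_zero hdg hg x 0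
  have ha0 : a = 0 := by
    have h1 := hlin (2 * π)
    have h2 : f (2 * π) = f 0 := by have := hp 0; simpa using this
    have hπ : (0:ℝ) < 2 * π := by positivity
    nlinarith [h1, h2]
  intro x
  have := hlin x
  rw [ha0] at this; simpa using this

/-- zero initial data + f'' = c f with c < 0 forces f = 0 (energy argument; works for c<0). -/
lemma ode_energy {f : ℝ → ℝ} {c : ℝ} (hc : c < 0) (hf : ContDiff ℝ (⊤ : ℕ∞) f)
    (hode : ∀ x, deriv (deriv f) x = c * f x) (h0 : f 0 = 0) (h0' : deriv f 0 = 0) :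
    ∀ x, f x = 0 := by
  set E : ℝ → ℝ := fun x => (deriv f x) ^ 2 - c * (f x) ^ 2 with hE
  have hdf : Differentiable ℝ f := hf.differentiable (by simp)
  have hddf : Differentiable ℝ (deriv f) := (contDiff_top_deriv hf).differentiable (by simp)
  have hEdiff : Differentiable ℝ E := by
    apply Differentiable.sub
    · exact hddf.pow 2
    · exact (hdf.pow 2).const_mul c
  have hE' : ∀ x, deriv E x = 0 := by
    intro x
    have h1 : HasDerivAt (fun x => (deriv f x) ^ 2) (2 * deriv f x * deriv (deriv f) x) x := by
      have := ((hddf x).hasDerivAt).fun_pow 2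
      simpa [mul_comm, mul_assoc, mul_left_comm] using this
    have h2 : HasDerivAt (fun x => c * (f x) ^ 2) (c * (2 * f x * deriv f x)) x := by
      have := (((hdf x).hasDerivAt).fun_pow 2).const_mul c
      simpa [mul_comm, mul_assoc, mul_left_comm] using this
    have := (h1.fun_sub h2).deriv
    rw [hE, this, hode x]; ring
  have hEc : ∀ x, E x = E 0 := fun x => is_const_of_deriv_eq_zero hEdiff hE' x 0
  have hE0 : E 0 = 0 := by simp [hE, h0, h0']
  intro x
  have := hEc x
  rw [hE0] at this
  have h1 : (deriv f x) ^ 2 - c * (f x) ^ 2 = 0 := this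
  have h2 : (f x) ^ 2 ≤ 0 := by nlinarith [sq_nonneg (deriv f x)]
  have h3 : (f x) ^ 2 = 0 := le_antisymm h2 (sq_nonneg _)
  exact pow_eq_zero_iff two_ne_zero |>.mp h3


/-- linear 1st-order ODE: g' = k g everywhere gives g x = g 0 * exp (k x) -/
lemma ode_first_order {g : ℝ → ℝ} {k : ℝ} (hg : Differentiable ℝ g)
    (h : ∀ x, deriv g x = k * g x) : ∀ x, g x = g 0 * exp (k * x) := by
  have hd : ∀ x, deriv (fun x => g x * exp (-(k * x))) x = 0 := by
    intro x
    have h1 : HasDerivAt (fun x => exp (-(k * x))) (exp (-(k * x)) * (-k)) x := by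
      have : HasDerivAt (fun x : ℝ => -(k * x)) (-k) x := by
        simpa using ((hasDerivAt_id x).const_mul k).fun_neg
      exact this.exp
    have h2 : HasDerivAt g (k * g x) x := h x ▸ (hg x).hasDerivAt
    have := (h2.fun_mul h1).deriv
    rw [this]; ring
  have hdg : Differentiable ℝ (fun x => g x * exp (-(k * x))) := by
    apply hg.mul; fun_prop
  have hc : ∀ x, g x * exp (-(k * x)) = g 0 * exp (-(k * 0)) :=
    fun x => is_const_of_deriv_eq_zero hdg hd x 0
  intro x
  have := hc x
  have hpos : exp (-(k * x)) ≠ 0 := exp_ne_zero _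
  field_simp at this
  have h2 : exp (-(k*x)) * exp (k*x) = 1 := by rw [← exp_add]; simp
  calc g x = g x * (exp (-(k*x)) * exp (k*x)) := by rw [h2]; ring
  _ = (g x * exp (-(k*x))) * exp (k*x) := by ring
  _ = g 0 * exp (k*x) := by rw [this]; simp

/-- c > 0: periodic solutions of f'' = c f vanish -/
lemma ode_pos {f : ℝ → ℝ} {c : ℝ} (hc : 0 < c) (hf : ContDiff ℝ (⊤ : ℕ∞) f)
    (hp : Periodic f (2 * π)) (hode : ∀ x, deriv (deriv f) x = c * f x) :
    ∀ x, f x = 0 := by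
  set k := Real.sqrt c with hk
  have hk0 : 0 < k := Real.sqrt_pos.2 hc
  have hk2 : k ^ 2 = c := Real.sq_sqrt hc.le
  have hdf : Differentiable ℝ f := hf.differentiable (by simp)
  have hddf : Differentiable ℝ (deriv f) := (contDiff_top_deriv hf).differentiable (by simp)
  set g : ℝ → ℝ := fun x => deriv f x + k * f x with hgdef
  have hgd : Differentiable ℝ g := hddf.add (hdf.const_mul k)
  have hg' : ∀ x, deriv g x = k * g x := by
    intro x
    have h1 : HasDerivAt g (deriv (deriv f) x + k * deriv f x) x :=
      ((hddf x).hasDerivAt).add (((hdf x).hasDerivAt).const_mul k)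
    rw [h1.deriv, hode x, hgdef]
    have : c = k * k := by rw [← hk2]; ring
    rw [this]; ring
  have hgsol := ode_first_order hgd hg'
  have hgper : Periodic g (2 * π) := fun x => by
    simp only [hgdef]; rw [periodic_deriv' _ hp x, hp x]
  have hg0 : g 0 = 0 := by
    have h1 := hgper 0
    rw [hgsol (0 + 2 * π), hgsol 0] at h1
    by_contra hg0ne
    have he0 : exp (k * 0) = 1 := by simp
    rw [he0, mul_one] at h1
    have hne : (1:ℝ) < exp (k * (0 + 2 * π)) := by
      rw [← Real.exp_zero]; apply Real.exp_lt_exp.2; nlinarith [pi_pos]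
    have := mul_left_cancel₀ hg0ne (h1.trans (mul_one (g 0)).symm)
    rw [this] at hne; exact lt_irrefl _ hne
  have hgz : ∀ x, g x = 0 := fun x => by rw [hgsol x, hg0]; ring
  -- now f' = -k f
  have hf' : ∀ x, deriv f x = -k * f x := by
    intro x; have := hgz x; simp only [hgdef] at this; linarith
  have hfsol := ode_first_order hdf hf'
  have hf0 : f 0 = 0 := by
    have h1 := hp 0
    rw [hfsol (0 + 2 * π), hfsol 0] at h1
    by_contra hf0ne
    have he0 : exp (-k * 0) = 1 := by simp
    rw [he0, mul_one] at h1
    have hne : exp (-k * (0 + 2 * π)) < 1 := by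
      rw [← Real.exp_zero]; apply Real.exp_lt_exp.2; nlinarith [pi_pos]
    have := mul_left_cancel₀ hf0ne (h1.trans (mul_one (f 0)).symm)
    rw [this] at hne; exact lt_irrefl _ hne
  intro x
  rw [hfsol x, hf0]; ring


/-- -1 < c < 0 : 2π-periodic solutions of f'' = c f vanish -/
lemma ode_neg {f : ℝ → ℝ} {c : ℝ} (hc1 : -1 < c) (hc0 : c < 0) (hf : ContDiff ℝ (⊤ : ℕ∞) f)
    (hp : Periodic f (2 * π)) (hode : ∀ x, deriv (deriv f) x = c * f x) :
    ∀ x, f x = 0 := by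
  set ω := Real.sqrt (-c) with hω
  have hω0 : 0 < ω := Real.sqrt_pos.2 (by linarith)
  have hω2 : ω ^ 2 = -c := Real.sq_sqrt (by linarith)
  have hω1 : ω < 1 := by
    nlinarith [hω2, hω0]
  set A := f 0 with hA
  set B := deriv f 0 / ω with hB
  set F : ℝ → ℝ := fun x => A * Real.cos (ω * x) + B * Real.sin (ω * x) with hF
  have hFc : ContDiff ℝ (⊤ : ℕ∞) F := by
    apply ContDiff.add
    · exact contDiff_const.mul (Real.contDiff_cos.comp (contDiff_const.mul contDiff_id))
    · exact contDiff_const.mul (Real.contDiff_sin.comp (contDiff_const.mul contDiff_id))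
  have hF1 : ∀ x, HasDerivAt F (-A * ω * Real.sin (ω * x) + B * ω * Real.cos (ω * x)) x := by
    intro x
    have hl : HasDerivAt (fun x : ℝ => ω * x) ω x := by simpa using ((hasDerivAt_id x).const_mul ω)
    have h1 : HasDerivAt (fun x => Real.cos (ω * x)) (-Real.sin (ω * x) * ω) x := hl.cos
    have h2 : HasDerivAt (fun x => Real.sin (ω * x)) (Real.cos (ω * x) * ω) x := hl.sin
    have := (h1.const_mul A).fun_add (h2.const_mul B)
    exact this.congr_deriv (by ring)
  have hF' : ∀ x, deriv F x = -A * ω * Real.sin (ω * x) + B * ω * Real.cos (ω * x) :=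
    fun x => (hF1 x).deriv
  have hF'' : ∀ x, deriv (deriv F) x = c * F x := by
    intro x
    have hd : deriv F = fun x => -A * ω * Real.sin (ω * x) + B * ω * Real.cos (ω * x) :=
      funext hF'
    rw [hd]
    have hl : HasDerivAt (fun x : ℝ => ω * x) ω x := by simpa using ((hasDerivAt_id x).const_mul ω)
    have h1 : HasDerivAt (fun x => Real.sin (ω * x)) (Real.cos (ω * x) * ω) x := hl.sin
    have h2 : HasDerivAt (fun x => Real.cos (ω * x)) (-Real.sin (ω * x) * ω) x := hl.cos
    have h3 := (h1.const_mul (-A * ω)).fun_add (h2.const_mul (B * ω))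
    rw [h3.deriv, hF]
    have hωω : ω * ω = -c := by nlinarith [hω2]
    show -A * ω * (Real.cos (ω * x) * ω) + B * ω * (-Real.sin (ω * x) * ω)
      = c * (A * Real.cos (ω * x) + B * Real.sin (ω * x))
    linear_combination (-(A * Real.cos (ω * x)) - B * Real.sin (ω * x)) * hωω
  -- h := f - F satisfies the energy lemma
  set h : ℝ → ℝ := fun x => f x - F x with hh
  have hhc : ContDiff ℝ (⊤ : ℕ∞) h := hf.sub hFc
  have hdh : ∀ x, deriv h x = deriv f x - deriv F x := by
    intro x
    exact deriv_fun_sub ((hf.differentiable (by simp)).differentiableAt)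
      ((hFc.differentiable (by simp)).differentiableAt)
  have hddh : ∀ x, deriv (deriv h) x = c * h x := by
    intro x
    have hd : deriv h = fun x => deriv f x - deriv F x := funext hdh
    rw [hd]
    have h1 : DifferentiableAt ℝ (deriv f) x :=
      ((contDiff_top_deriv hf).differentiable (by simp)).differentiableAt
    have h2 : DifferentiableAt ℝ (deriv F) x :=
      ((contDiff_top_deriv hFc).differentiable (by simp)).differentiableAt
    rw [deriv_fun_sub h1 h2, hode x, hF'' x, hh]
    ring
  have hh0 : h 0 = 0 := by
    simp [hh, hF, hA]
  have hh0' : deriv h 0 = 0 := by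
    rw [hdh 0, hF' 0]
    simp [hB]
    field_simp
    ring
  have hz := ode_energy hc0 hhc hddh hh0 hh0'
  have hfF : ∀ x, f x = F x := fun x => by have := hz x; simp [hh] at this; linarith
  -- periodicity forces A = B = 0
  have e1 : A * Real.cos (ω * (2 * π)) + B * Real.sin (ω * (2 * π)) = A := by
    have := hp 0
    rw [hfF (0 + 2 * π), hfF 0] at this
    simpa [hF] using this
  have e2 : -A * Real.sin (ω * (2 * π)) + B * Real.cos (ω * (2 * π)) = B := by
    have hpd := periodic_deriv' (2 * π) hp 0
    have hfd : deriv f = deriv F := by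
      have : f = F := funext hfF
      rw [this]
    rw [hfd, hF' (0 + 2 * π), hF' 0] at hpd
    rw [show (0:ℝ) + 2 * π = 2 * π by ring] at hpd
    simp only [mul_zero, Real.sin_zero, Real.cos_zero] at hpd
    have hωne : ω ≠ 0 := ne_of_gt hω0
    have h4 : (-A * Real.sin (ω * (2 * π)) + B * Real.cos (ω * (2 * π))) * ω = B * ω := by
      linear_combination hpd
    exact mul_right_cancel₀ hωne h4
  have key : (A ^ 2 + B ^ 2) * Real.cos (ω * (2 * π)) = A ^ 2 + B ^ 2 := by
    linear_combination A * e1 + B * e2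
  have hAB : A ^ 2 + B ^ 2 = 0 := by
    by_contra hne
    have hcos : Real.cos (ω * (2 * π)) = 1 := by
      exact mul_left_cancel₀ hne (key.trans (mul_one _).symm)
    rcases (Real.cos_eq_one_iff _).1 hcos with ⟨n, hn⟩
    have : (n : ℝ) = ω := by
      have hπ : (2:ℝ) * π ≠ 0 := by positivity
      field_simp at hn
      nlinarith [hn, pi_pos]
    have hn0 : 0 < (n:ℝ) := by rw [this]; exact hω0
    have hn1 : (n:ℝ) < 1 := by rw [this]; exact hω1
    have : (0:ℤ) < n := by exact_mod_cast hn0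
    have : (1:ℤ) ≤ n := this
    have : (1:ℝ) ≤ (n:ℝ) := by exact_mod_cast this
    linarith
  have hA0 : A = 0 := by nlinarith [sq_nonneg A, sq_nonneg B]
  have hB0 : B = 0 := by nlinarith [sq_nonneg A, sq_nonneg B]
  intro x
  rw [hfF x, hF]
  simp [hA0, hB0]



/-- Step A : an eigenfunction of the cylindrical OU operator with positive eigenvalue,
square-integrable against the Gaussian weight together with its y-derivative, vanishes. -/
lemma stepA (v : ℝ × ℝ → ℝ) (lam : ℝ) (hv : ContDiff ℝ (⊤ : ℕ∞) v)
    (hper : ∀ y θ : ℝ, v (y, θ + 2 * π) = v (y, θ))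
    (hL2v : IntegrableOn (fun p : ℝ × ℝ => (v p) ^ 2 * Real.exp (-(p.1 ^ 2) / 4))
      (Set.univ ×ˢ Set.Icc 0 (2 * π)))
    (hL2vy : IntegrableOn (fun p : ℝ × ℝ => (D1 v p) ^ 2 * Real.exp (-(p.1 ^ 2) / 4))
      (Set.univ ×ˢ Set.Icc 0 (2 * π)))
    (hlam : 0 < lam)
    (hpde : ∀ p : ℝ × ℝ, D1 (D1 v) p - p.1 / 2 * D1 v p + 1 / 2 * D2 (D2 v) p = lam * v p) :
    ∀ p : ℝ × ℝ, v p = 0 := by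
  have hπ : (0:ℝ) < 2 * π := by positivity
  set w : ℝ → ℝ := fun y => Real.exp (-(y ^ 2) / 4) with hw
  have hwpos : ∀ y, 0 < w y := fun y => Real.exp_pos _
  have hwcont : Continuous w := by fun_prop
  have hwderiv : ∀ y, HasDerivAt w (-(y / 2) * w y) y := by
    intro y
    have h1 : HasDerivAt (fun y : ℝ => -(y ^ 2) / 4) (-(2 * y ^ 1) / 4) y :=
      ((hasDerivAt_pow 2 y).neg).div_const 4
    have := h1.exp
    convert this using 1
    simp [hw]; ring
  -- continuity of all the derivatives involved
  have hvc : Continuous v := hv.continuous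
  have hv1 : ContDiff ℝ (⊤ : ℕ∞) (D1 v) := contDiff_D1 hv
  have hv2 : ContDiff ℝ (⊤ : ℕ∞) (D2 v) := contDiff_D2 hv
  have hv11 : ContDiff ℝ (⊤ : ℕ∞) (D1 (D1 v)) := contDiff_D1 hv1
  have hv22 : ContDiff ℝ (⊤ : ℕ∞) (D2 (D2 v)) := contDiff_D2 hv2
  -- periodicity in θ of v and D2 v
  have hperv : ∀ y θ, v (y, θ + 2 * π) = v (y, θ) := hper
  have hpervt : ∀ y θ, D2 v (y, θ + 2 * π) = D2 v (y, θ) := by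
    intro y θ
    have hp : Function.Periodic (fun t => v (y, t)) (2 * π) := fun t => hper y t
    have := periodic_deriv' (2 * π) hp θ
    rwa [deriv_slice2 hv, deriv_slice2 hv] at this
  -- the four integrands
  set Q1 : ℝ × ℝ → ℝ := fun p => (v p) ^ 2 * w p.1 with hQ1
  set Q2 : ℝ × ℝ → ℝ := fun p => (D1 v p) ^ 2 * w p.1 with hQ2
  set Q3 : ℝ × ℝ → ℝ := fun p => (D2 v p) ^ 2 * w p.1 with hQ3
  set Afun : ℝ × ℝ → ℝ := fun p =>
    w p.1 * (lam * v p - 1 / 2 * D2 (D2 v) p) * v p + w p.1 * (D1 v p) ^ 2 with hA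
  set Bfun : ℝ × ℝ → ℝ := fun p => w p.1 * (D2 (D2 v) p * v p + (D2 v p) ^ 2) with hB
  have hQ1c : Continuous Q1 := by apply Continuous.mul (hvc.pow 2) (hwcont.comp continuous_fst)
  have hQ2c : Continuous Q2 := by
    apply Continuous.mul ((hv1.continuous).pow 2) (hwcont.comp continuous_fst)
  have hQ3c : Continuous Q3 := by
    apply Continuous.mul ((hv2.continuous).pow 2) (hwcont.comp continuous_fst)
  have hAc : Continuous Afun := by
    apply Continuous.add
    · exact ((hwcont.comp continuous_fst).mul
        ((continuous_const.mul hvc).sub (continuous_const.mul hv22.continuous))).mul hvc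
    · exact (hwcont.comp continuous_fst).mul ((hv1.continuous).pow 2)
  have hBc : Continuous Bfun := by
    apply Continuous.mul (hwcont.comp continuous_fst)
    exact ((hv22.continuous).mul hvc).add ((hv2.continuous).pow 2)
  -- rectangles
  have hrect : ∀ S : ℝ, IsCompact (Set.Icc (-S) S ×ˢ Set.Icc 0 (2 * π)) :=
    fun S => isCompact_Icc.prod isCompact_Icc
  have hrectm : ∀ S : ℝ, MeasurableSet (Set.Icc (-S) S ×ˢ Set.Icc 0 (2 * π)) :=
    fun S => measurableSet_Icc.prod measurableSet_Icc
  have hint : ∀ (f : ℝ × ℝ → ℝ), Continuous f → ∀ S : ℝ,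
      IntegrableOn f (Set.Icc (-S) S ×ˢ Set.Icc 0 (2 * π)) :=
    fun f hf S => hf.continuousOn.integrableOn_compact (hrect S)
  -- inner θ-integral of Bfun vanishes
  have hBinner : ∀ y : ℝ, ∫ θ in Set.Icc 0 (2 * π), Bfun (y, θ) = 0 := by
    intro y
    have hG : ∀ θ ∈ Set.uIcc 0 (2 * π), HasDerivAt (fun t => D2 v (y, t) * v (y, t))
        (D2 (D2 v) (y, θ) * v (y, θ) + (D2 v (y, θ)) ^ 2) θ := by
      intro θ _
      have h1 := hasDerivAt_slice2 hv2 y θ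
      have h2 := hasDerivAt_slice2 hv y θ
      have := h1.fun_mul h2
      exact this.congr_deriv (by ring)
    have hInt : IntervalIntegrable (fun θ => D2 (D2 v) (y, θ) * v (y, θ) + (D2 v (y, θ)) ^ 2)
        volume 0 (2 * π) := by
      apply Continuous.intervalIntegrable
      have hcy : Continuous (fun θ : ℝ => (y, θ)) := by fun_prop
      exact ((hv22.continuous.comp hcy).mul (hvc.comp hcy)).add ((hv2.continuous.comp hcy).pow 2)
    have hFTC := intervalIntegral.integral_eq_sub_of_hasDerivAt hG hInt
    have hzero : D2 v (y, 2 * π) * v (y, 2 * π) - D2 v (y, 0) * v (y, 0) = 0 := by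
      have e1 := hperv y 0
      have e2 := hpervt y 0
      rw [zero_add] at e1 e2
      rw [e1, e2]; ring
    rw [hzero] at hFTC
    -- convert the set integral over Icc to the interval integral
    have hIcc : (∫ θ in Set.Icc 0 (2 * π), Bfun (y, θ)) = ∫ θ in (0:ℝ)..(2 * π), Bfun (y, θ) := by
      rw [intervalIntegral.integral_of_le hπ.le, MeasureTheory.integral_Icc_eq_integral_Ioc]
    rw [hIcc]
    have : (∫ θ in (0:ℝ)..(2 * π), Bfun (y, θ))
        = w y * ∫ θ in (0:ℝ)..(2 * π), (D2 (D2 v) (y, θ) * v (y, θ) + (D2 v (y, θ)) ^ 2) := by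
      rw [← intervalIntegral.integral_const_mul]
    rw [this, hFTC, mul_zero]
  -- inner y-integral of Afun via FTC
  set h : ℝ → ℝ := fun y => ∫ θ in Set.Icc 0 (2 * π), w y * D1 v (y, θ) * v (y, θ) with hh
  have hAinner : ∀ (S : ℝ) (θ : ℝ), 0 ≤ S →
      (∫ y in (-S)..S, Afun (y, θ))
        = w S * D1 v (S, θ) * v (S, θ) - w (-S) * D1 v (-S, θ) * v (-S, θ) := by
    intro S θ hS
    have hG : ∀ y ∈ Set.uIcc (-S) S, HasDerivAt (fun s => w s * D1 v (s, θ) * v (s, θ))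
        (Afun (y, θ)) y := by
      intro y _
      have h1 := hwderiv y
      have h2 := hasDerivAt_slice1 hv1 y θ
      have h3 := hasDerivAt_slice1 hv y θ
      have hd := (h1.fun_mul h2).fun_mul h3
      refine hd.congr_deriv ?_
      have hp := hpde (y, θ)
      simp only [hA]
      have : D1 (D1 v) (y, θ) = lam * v (y, θ) + y / 2 * D1 v (y, θ)
          - 1 / 2 * D2 (D2 v) (y, θ) := by linarith [hp]
      rw [this]
      ring
    have hInt : IntervalIntegrable (fun y => Afun (y, θ)) volume (-S) S := by
      apply Continuous.intervalIntegrable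
      fun_prop
    exact intervalIntegral.integral_eq_sub_of_hasDerivAt hG hInt
  have hprodm : (volume : Measure (ℝ × ℝ)) = (volume : Measure ℝ).prod volume :=
    MeasureTheory.Measure.volume_eq_prod ℝ ℝ
  have hpoint : ∀ p : ℝ × ℝ, lam * Q1 p + Q2 p + 1 / 2 * Q3 p = Afun p + 1 / 2 * Bfun p := by
    intro p
    simp only [hQ1, hQ2, hQ3, hA, hB]
    ring
  have hIdentity : ∀ S : ℝ, 0 ≤ S →
      lam * (∫ p in Set.Icc (-S) S ×ˢ Set.Icc 0 (2 * π), Q1 p)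
        + (∫ p in Set.Icc (-S) S ×ˢ Set.Icc 0 (2 * π), Q2 p)
        + 1 / 2 * (∫ p in Set.Icc (-S) S ×ˢ Set.Icc 0 (2 * π), Q3 p)
      = h S - h (-S) := by
    intro S hS
    have hSS : -S ≤ S := by linarith
    have hQ1i := hint Q1 hQ1c S
    have hQ2i := hint Q2 hQ2c S
    have hQ3i := hint Q3 hQ3c S
    have hAi := hint Afun hAc S
    have hBi := hint Bfun hBc S
    have e1 : lam * (∫ p in Set.Icc (-S) S ×ˢ Set.Icc 0 (2 * π), Q1 p)
        + (∫ p in Set.Icc (-S) S ×ˢ Set.Icc 0 (2 * π), Q2 p)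
        + 1 / 2 * (∫ p in Set.Icc (-S) S ×ˢ Set.Icc 0 (2 * π), Q3 p)
        = ∫ p in Set.Icc (-S) S ×ˢ Set.Icc 0 (2 * π), (Afun p + 1 / 2 * Bfun p) := by
      symm
      have hcg : (∫ p in Set.Icc (-S) S ×ˢ Set.Icc 0 (2 * π), (Afun p + 1 / 2 * Bfun p))
          = ∫ p in Set.Icc (-S) S ×ˢ Set.Icc 0 (2 * π), (lam * Q1 p + Q2 p + 1 / 2 * Q3 p) := by
        apply MeasureTheory.setIntegral_congr_fun (hrectm S)
        intro p _
        exact (hpoint p).symm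
      rw [hcg]
      have i1 : IntegrableOn (fun p => lam * Q1 p) (Set.Icc (-S) S ×ˢ Set.Icc 0 (2 * π)) :=
        hQ1i.const_mul lam
      have i12 : IntegrableOn (fun p => lam * Q1 p + Q2 p)
          (Set.Icc (-S) S ×ˢ Set.Icc 0 (2 * π)) := by exact i1.add hQ2i
      have i3 : IntegrableOn (fun p => 1 / 2 * Q3 p)
          (Set.Icc (-S) S ×ˢ Set.Icc 0 (2 * π)) := hQ3i.const_mul (1/2)
      rw [MeasureTheory.integral_add i12 i3, MeasureTheory.integral_add i1 hQ2i,
        MeasureTheory.integral_const_mul, MeasureTheory.integral_const_mul]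
    have eB : (∫ p in Set.Icc (-S) S ×ˢ Set.Icc 0 (2 * π), Bfun p) = 0 := by
      rw [hprodm] at hBi ⊢
      rw [MeasureTheory.setIntegral_prod _ hBi]
      have : ∀ y ∈ Set.Icc (-S) S, (∫ θ in Set.Icc 0 (2 * π), Bfun (y, θ)) = 0 :=
        fun y _ => hBinner y
      rw [MeasureTheory.setIntegral_congr_fun measurableSet_Icc this]
      simp
    have eA : (∫ p in Set.Icc (-S) S ×ˢ Set.Icc 0 (2 * π), Afun p) = h S - h (-S) := by
      rw [hprodm] at hAi ⊢
      rw [MeasureTheory.setIntegral_prod _ hAi]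
      -- swap the order of integration
      have hswap : (∫ y in Set.Icc (-S) S, ∫ θ in Set.Icc 0 (2 * π), Afun (y, θ))
          = ∫ θ in Set.Icc 0 (2 * π), ∫ y in Set.Icc (-S) S, Afun (y, θ) := by
        apply MeasureTheory.integral_integral_swap
        rw [MeasureTheory.Measure.prod_restrict]
        exact hAi
      rw [hswap]
      have hinner : ∀ θ ∈ Set.Icc (0:ℝ) (2 * π), (∫ y in Set.Icc (-S) S, Afun (y, θ))
          = w S * D1 v (S, θ) * v (S, θ) - w (-S) * D1 v (-S, θ) * v (-S, θ) := by
        intro θ _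
        rw [MeasureTheory.integral_Icc_eq_integral_Ioc,
          ← intervalIntegral.integral_of_le hSS]
        exact hAinner S θ hS
      rw [MeasureTheory.setIntegral_congr_fun measurableSet_Icc hinner]
      have hc1 : Continuous (fun θ : ℝ => w S * D1 v (S, θ) * v (S, θ)) := by
        have hcS : Continuous (fun θ : ℝ => (S, θ)) := by fun_prop
        exact ((continuous_const.mul (hv1.continuous.comp hcS)).mul (hvc.comp hcS))
      have hc2 : Continuous (fun θ : ℝ => w (-S) * D1 v (-S, θ) * v (-S, θ)) := by
        have hcS : Continuous (fun θ : ℝ => (-S, θ)) := by fun_prop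
        exact ((continuous_const.mul (hv1.continuous.comp hcS)).mul (hvc.comp hcS))
      rw [MeasureTheory.integral_sub (hc1.integrableOn_Icc) (hc2.integrableOn_Icc)]
    have e2 : (∫ p in Set.Icc (-S) S ×ˢ Set.Icc 0 (2 * π), (Afun p + 1 / 2 * Bfun p))
        = (∫ p in Set.Icc (-S) S ×ˢ Set.Icc 0 (2 * π), Afun p)
          + 1 / 2 * ∫ p in Set.Icc (-S) S ×ˢ Set.Icc 0 (2 * π), Bfun p := by
      have iB : IntegrableOn (fun p => 1 / 2 * Bfun p)
          (Set.Icc (-S) S ×ˢ Set.Icc 0 (2 * π)) := hBi.const_mul (1/2)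
      rw [MeasureTheory.integral_add hAi iB, MeasureTheory.integral_const_mul]
    rw [e1, e2, eA, eB]
    ring
  -- marginal integrability
  have hstrip : ∀ (f : ℝ × ℝ → ℝ), IntegrableOn f (Set.univ ×ˢ Set.Icc 0 (2 * π)) volume →
      Integrable (fun y => ∫ θ in Set.Icc 0 (2 * π), f (y, θ)) volume := by
    intro f hf
    have h1 : Integrable f ((volume : Measure ℝ).prod (volume.restrict (Set.Icc 0 (2 * π)))) := by
      have h2 : IntegrableOn f (Set.univ ×ˢ Set.Icc 0 (2 * π))
          ((volume : Measure ℝ).prod (volume : Measure ℝ)) := by rwa [hprodm] at hf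
      rw [IntegrableOn, ← MeasureTheory.Measure.prod_restrict,
        MeasureTheory.Measure.restrict_univ] at h2
      exact h2
    exact h1.integral_prod_left
  set m1 : ℝ → ℝ := fun y => ∫ θ in Set.Icc 0 (2 * π), Q1 (y, θ) with hm1def
  set m2 : ℝ → ℝ := fun y => ∫ θ in Set.Icc 0 (2 * π), Q2 (y, θ) with hm2def
  have hm1 : Integrable m1 volume := hstrip Q1 hL2v
  have hm2 : Integrable m2 volume := hstrip Q2 hL2vy
  have hQ1nn : ∀ p : ℝ × ℝ, 0 ≤ Q1 p := by
    intro p; simp only [hQ1]; exact mul_nonneg (sq_nonneg _) (hwpos _).le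
  have hQ2nn : ∀ p : ℝ × ℝ, 0 ≤ Q2 p := by
    intro p; simp only [hQ2]; exact mul_nonneg (sq_nonneg _) (hwpos _).le
  have hm1nn : ∀ y, 0 ≤ m1 y :=
    fun y => MeasureTheory.setIntegral_nonneg measurableSet_Icc (fun θ _ => hQ1nn (y, θ))
  have hm2nn : ∀ y, 0 ≤ m2 y :=
    fun y => MeasureTheory.setIntegral_nonneg measurableSet_Icc (fun θ _ => hQ2nn (y, θ))
  -- bound on the boundary term
  have habs : ∀ y, |h y| ≤ 1 / 2 * (m2 y + m1 y) := by
    intro y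
    have hcy : Continuous (fun θ : ℝ => (y, θ)) := by fun_prop
    have hic : Continuous (fun θ : ℝ => w y * D1 v (y, θ) * v (y, θ)) :=
      (continuous_const.mul (hv1.continuous.comp hcy)).mul (hvc.comp hcy)
    have h1 : |h y| ≤ ∫ θ in Set.Icc 0 (2 * π), |w y| * |D1 v (y, θ)| * |v (y, θ)| := by
      simpa [Real.norm_eq_abs, abs_mul] using
        MeasureTheory.norm_integral_le_integral_norm
          (μ := volume.restrict (Set.Icc 0 (2 * π)))
          (fun θ => w y * D1 v (y, θ) * v (y, θ))
    have h2 : (∫ θ in Set.Icc 0 (2 * π), |w y| * |D1 v (y, θ)| * |v (y, θ)|)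
        ≤ ∫ θ in Set.Icc 0 (2 * π), 1 / 2 * (Q2 (y, θ) + Q1 (y, θ)) := by
      apply MeasureTheory.setIntegral_mono_on
      · exact ((continuous_const.mul ((hv1.continuous.comp hcy).abs)).mul
          ((hvc.comp hcy).abs)).integrableOn_Icc
      · exact Continuous.integrableOn_Icc (by
          exact continuous_const.mul ((hQ2c.comp hcy).add (hQ1c.comp hcy)))
      · exact measurableSet_Icc
      · intro θ _
        have hwy := hwpos y
        have he : |w y| * |D1 v (y, θ)| * |v (y, θ)| = w y * (|D1 v (y, θ)| * |v (y, θ)|) := by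
          rw [abs_of_pos hwy]; ring
        rw [he]
        simp only [hQ1, hQ2]
        nlinarith [mul_nonneg hwy.le (sq_nonneg (|D1 v (y, θ)| - |v (y, θ)|)),
          sq_abs (D1 v (y, θ)), sq_abs (v (y, θ)), hwy.le]
    have h3 : (∫ θ in Set.Icc 0 (2 * π), 1 / 2 * (Q2 (y, θ) + Q1 (y, θ)))
        = 1 / 2 * (m2 y + m1 y) := by
      rw [MeasureTheory.integral_const_mul]
      have i2 : IntegrableOn (fun θ => Q2 (y, θ)) (Set.Icc 0 (2 * π)) volume :=
        (hQ2c.comp hcy).integrableOn_Icc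
      have i1 : IntegrableOn (fun θ => Q1 (y, θ)) (Set.Icc 0 (2 * π)) volume :=
        (hQ1c.comp hcy).integrableOn_Icc
      rw [MeasureTheory.integral_add i2 i1]
    linarith [h1, h2, le_of_eq h3]
  -- decay of the boundary term along a sequence
  have hdecay : ∀ ε : ℝ, 0 < ε → ∀ N : ℝ, ∃ y0, N ≤ y0 ∧ |h y0| + |h (-y0)| ≤ ε := by
    intro ε hε N
    by_contra hcon
    push_neg at hcon
    set ψ : ℝ → ℝ := fun y => 1 / 2 * (m2 y + m1 y) + 1 / 2 * (m2 (-y) + m1 (-y)) with hψdef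
    have hψint : Integrable ψ volume := by
      apply Integrable.add
      · exact (hm2.add hm1).const_mul (1/2)
      · exact (((hm2.add hm1).const_mul (1/2)).comp_neg)
    have hψnn : ∀ y, 0 ≤ ψ y := by
      intro y
      have := hm1nn y; have := hm2nn y; have := hm1nn (-y); have := hm2nn (-y)
      simp only [hψdef]; linarith
    have hψbound : ∀ y, |h y| + |h (-y)| ≤ ψ y := by
      intro y
      have h1 := habs y; have h2 := habs (-y)
      simp only [hψdef]; linarith
    have hI0 : (0:ℝ) ≤ ∫ y, ψ y := MeasureTheory.integral_nonneg hψnn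
    set T : ℝ := (∫ y, ψ y) / ε + 1 with hT
    have hT1 : (1:ℝ) ≤ T := by
      have : 0 ≤ (∫ y, ψ y) / ε := div_nonneg hI0 hε.le
      simp only [hT]; linarith
    have hle : ∀ y ∈ Set.Icc N (N + T), ε ≤ ψ y := by
      intro y hy
      have := hcon y hy.1
      linarith [hψbound y]
    have hIccInt : IntegrableOn ψ (Set.Icc N (N + T)) volume := hψint.integrableOn
    have hconst : IntegrableOn (fun _ : ℝ => ε) (Set.Icc N (N + T)) volume := by
      apply (MeasureTheory.integrableOn_const_iff (by simp)).2
      right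
      rw [Real.volume_Icc]
      exact ENNReal.ofReal_lt_top
    have hmono := MeasureTheory.setIntegral_mono_on hconst hIccInt measurableSet_Icc hle
    have hconstval : (∫ _ in Set.Icc N (N + T), (ε:ℝ)) = T * ε := by
      rw [MeasureTheory.setIntegral_const, Real.volume_real_Icc]
      rw [max_eq_left (by linarith : (0:ℝ) ≤ N + T - N)]
      simp only [smul_eq_mul]
      ring
    have hup : (∫ y in Set.Icc N (N + T), ψ y) ≤ ∫ y, ψ y :=
      MeasureTheory.setIntegral_le_integral hψint (Filter.Eventually.of_forall hψnn)
    have hTε : T * ε = (∫ y, ψ y) + ε := by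
      simp only [hT]
      field_simp
    rw [hconstval] at hmono
    linarith
  -- the integral of Q1 over every rectangle vanishes
  have hIzero : ∀ S : ℝ, 0 ≤ S →
      (∫ p in Set.Icc (-S) S ×ˢ Set.Icc 0 (2 * π), Q1 p) = 0 := by
    intro S hS
    have hnn : 0 ≤ ∫ p in Set.Icc (-S) S ×ˢ Set.Icc 0 (2 * π), Q1 p :=
      MeasureTheory.setIntegral_nonneg (hrectm S) (fun p _ => hQ1nn p)
    have hsmall : ∀ ε : ℝ, 0 < ε →
        lam * (∫ p in Set.Icc (-S) S ×ˢ Set.Icc 0 (2 * π), Q1 p) ≤ ε := by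
      intro ε hε
      obtain ⟨y0, hy0ge, hy0⟩ := hdecay ε hε (max S 0)
      have h0y0 : 0 ≤ y0 := le_trans (le_max_right S 0) hy0ge
      have hSy0 : S ≤ y0 := le_trans (le_max_left S 0) hy0ge
      have hsub : Set.Icc (-S) S ×ˢ Set.Icc 0 (2 * π)
          ⊆ Set.Icc (-y0) y0 ×ˢ Set.Icc 0 (2 * π) :=
        Set.prod_mono (Set.Icc_subset_Icc (by linarith) hSy0) subset_rfl
      have hmono : (∫ p in Set.Icc (-S) S ×ˢ Set.Icc 0 (2 * π), Q1 p)
          ≤ ∫ p in Set.Icc (-y0) y0 ×ˢ Set.Icc 0 (2 * π), Q1 p := by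
        apply MeasureTheory.setIntegral_mono_set (hint Q1 hQ1c y0)
        · exact Filter.Eventually.of_forall hQ1nn
        · exact HasSubset.Subset.eventuallyLE hsub
      have hid := hIdentity y0 h0y0
      have hIynn : 0 ≤ ∫ p in Set.Icc (-y0) y0 ×ˢ Set.Icc 0 (2 * π), Q2 p :=
        MeasureTheory.setIntegral_nonneg (hrectm y0) (fun p _ => hQ2nn p)
      have hQ3nn : ∀ p : ℝ × ℝ, 0 ≤ Q3 p := by
        intro p; simp only [hQ3]; exact mul_nonneg (sq_nonneg _) (hwpos _).le
      have hItnn : 0 ≤ ∫ p in Set.Icc (-y0) y0 ×ˢ Set.Icc 0 (2 * π), Q3 p :=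
        MeasureTheory.setIntegral_nonneg (hrectm y0) (fun p _ => hQ3nn p)
      have hstep : lam * (∫ p in Set.Icc (-y0) y0 ×ˢ Set.Icc 0 (2 * π), Q1 p)
          ≤ |h y0| + |h (-y0)| := by
        have := le_abs_self (h y0)
        have := neg_abs_le (h (-y0))
        linarith
      have := mul_le_mul_of_nonneg_left hmono hlam.le
      linarith
    by_contra hne
    have hpos : 0 < ∫ p in Set.Icc (-S) S ×ˢ Set.Icc 0 (2 * π), Q1 p :=
      lt_of_le_of_ne hnn (Ne.symm hne)
    have := hsmall (lam * (∫ p in Set.Icc (-S) S ×ˢ Set.Icc 0 (2 * π), Q1 p) / 2)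
      (by positivity)
    nlinarith
  -- conclude : v vanishes identically
  intro p
  obtain ⟨y, θ⟩ := p
  by_contra hvp
  have hgper : Function.Periodic (fun t => v (y, t)) (2 * π) := fun t => hper y t
  obtain ⟨θ₀, hθ₀mem, hθ₀⟩ := hgper.exists_mem_Ico₀ hπ θ
  have hv0 : v (y, θ₀) ≠ 0 := by rw [← hθ₀]; exact hvp
  have hUopen : IsOpen {q : ℝ × ℝ | v q ≠ 0} := by
    have : {q : ℝ × ℝ | v q ≠ 0} = v ⁻¹' ({0}ᶜ) := rfl
    rw [this]
    exact isOpen_compl_singleton.preimage hvc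
  obtain ⟨r, hr, hball⟩ := Metric.isOpen_iff.1 hUopen (y, θ₀) hv0
  set θ₁ : ℝ := θ₀ + min r (2 * π - θ₀) / 2 with hθ₁
  have hθ₀0 : 0 ≤ θ₀ := hθ₀mem.1
  have hθ₀2π : θ₀ < 2 * π := hθ₀mem.2
  have hminpos : 0 < min r (2 * π - θ₀) := lt_min hr (by linarith)
  have hθ₁pos : 0 < θ₁ := by simp only [hθ₁]; linarith
  have hθ₁lt : θ₁ < 2 * π := by
    have : min r (2 * π - θ₀) ≤ 2 * π - θ₀ := min_le_right _ _
    simp only [hθ₁]; linarith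
  have hθ₁ball : ((y, θ₁) : ℝ × ℝ) ∈ Metric.ball ((y, θ₀) : ℝ × ℝ) r := by
    rw [Metric.mem_ball, Prod.dist_eq]
    have h1 : dist y y = 0 := dist_self y
    have h2 : dist θ₁ θ₀ = |θ₁ - θ₀| := Real.dist_eq θ₁ θ₀
    have h3 : |θ₁ - θ₀| < r := by
      rw [abs_of_pos (by simp only [hθ₁]; linarith : (0:ℝ) < θ₁ - θ₀)]
      have : min r (2 * π - θ₀) ≤ r := min_le_left _ _
      simp only [hθ₁]; linarith
    rw [h1, h2]
    simp [h3, hr]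
  have hv1ne : v (y, θ₁) ≠ 0 := hball hθ₁ball
  set S : ℝ := |y| + 1 with hSdef
  have hS0 : (0:ℝ) ≤ S := by positivity
  have hWopen : IsOpen ({q : ℝ × ℝ | v q ≠ 0} ∩ Set.Ioo (-S) S ×ˢ Set.Ioo 0 (2 * π)) :=
    hUopen.inter (isOpen_Ioo.prod isOpen_Ioo)
  have hWmem : ((y, θ₁) : ℝ × ℝ) ∈
      {q : ℝ × ℝ | v q ≠ 0} ∩ Set.Ioo (-S) S ×ˢ Set.Ioo 0 (2 * π) := by
    refine ⟨hv1ne, ⟨?_, hθ₁pos, hθ₁lt⟩⟩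
    constructor
    · have := neg_abs_le y; simp only [hSdef]; linarith
    · have := le_abs_self y; simp only [hSdef]; linarith
  have hWsub : {q : ℝ × ℝ | v q ≠ 0} ∩ Set.Ioo (-S) S ×ˢ Set.Ioo 0 (2 * π)
      ⊆ Function.support Q1 ∩ Set.Icc (-S) S ×ˢ Set.Icc 0 (2 * π) := by
    rintro q ⟨hq1, hq2⟩
    constructor
    · simp only [Function.mem_support, hQ1]
      exact mul_ne_zero (pow_ne_zero 2 hq1) (ne_of_gt (hwpos _))
    · exact Set.prod_mono Set.Ioo_subset_Icc_self Set.Ioo_subset_Icc_self hq2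
  have hmeaspos : 0 < volume (Function.support Q1 ∩ Set.Icc (-S) S ×ˢ Set.Icc 0 (2 * π)) :=
    lt_of_lt_of_le (hWopen.measure_pos volume ⟨_, hWmem⟩) (measure_mono hWsub)
  have hintpos : 0 < ∫ p in Set.Icc (-S) S ×ˢ Set.Icc 0 (2 * π), Q1 p := by
    rw [MeasureTheory.setIntegral_pos_iff_support_of_nonneg_ae
      (Filter.Eventually.of_forall hQ1nn) (hint Q1 hQ1c S)]
    exact hmeaspos
  rw [hIzero S hS0] at hintpos
  exact lt_irrefl _ hintpos


open Real MeasureTheory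

/-- The Ornstein–Uhlenbeck operator on the normalized round cylinder ℝ × S¹(√2):
`L u = ∂²_y u − (y/2) ∂_y u + (1/2) ∂²_ϑ u + u`. -/
noncomputable def OU (u : ℝ → ℝ → ℝ) (y ϑ : ℝ) : ℝ :=
  deriv (deriv (fun s => u s ϑ)) y - y / 2 * deriv (fun s => u s ϑ) y
    + 1 / 2 * deriv (deriv (fun t => u y t)) ϑ + u y ϑ

/-- Square-integrability against the Gaussian weight `e^{−y²/4}` on `ℝ × [0, 2π]`. -/
def gaussL2 (f : ℝ → ℝ → ℝ) : Prop :=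
  MeasureTheory.IntegrableOn
    (fun p : ℝ × ℝ => (f p.1 p.2) ^ 2 * Real.exp (-(p.1 ^ 2) / 4))
    (Set.univ ×ˢ Set.Icc 0 (2 * Real.pi))

/-- The only unstable eigenfunction of the shifted operator `L' = L − 1/2` is the constant
function `1`, with eigenvalue `1/2`. -/
theorem OU_shifted_unstable_eigenfunctions (u : ℝ → ℝ → ℝ) (lam : ℝ)
    (hu : ContDiff ℝ (⊤ : ℕ∞) (fun p : ℝ × ℝ => u p.1 p.2))
    (hper : ∀ y : ℝ, Function.Periodic (u y) (2 * Real.pi))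
    (hne : ∃ y ϑ : ℝ, u y ϑ ≠ 0)
    (hL2 : gaussL2 u)
    (hL2y : gaussL2 (fun y ϑ => deriv (fun s => u s ϑ) y))
    (hL2t : gaussL2 (fun y ϑ => deriv (fun t => u y t) ϑ))
    (hL2yy : gaussL2 (fun y ϑ => deriv (deriv (fun s => u s ϑ)) y))
    (hL2yt : gaussL2 (fun y ϑ => deriv (fun s => deriv (fun t => u s t) ϑ) y))
    (hL2tt : gaussL2 (fun y ϑ => deriv (deriv (fun t => u y t)) ϑ))
    (hlam : 0 < lam)
    (heig : ∀ y ϑ : ℝ, OU u y ϑ - (1 / 2) * u y ϑ = lam * u y ϑ) :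
    lam = 1 / 2 ∧ ∃ c : ℝ, c ≠ 0 ∧ ∀ y ϑ : ℝ, u y ϑ = c := by
  set P : ℝ × ℝ → ℝ := fun p => u p.1 p.2 with hP
  have huP : ContDiff ℝ (⊤ : ℕ∞) P := hu
  have hP1 : ContDiff ℝ (⊤ : ℕ∞) (D1 P) := contDiff_D1 huP
  have hP11 : ContDiff ℝ (⊤ : ℕ∞) (D1 (D1 P)) := contDiff_D1 hP1
  have hP2 : ContDiff ℝ (⊤ : ℕ∞) (D2 P) := contDiff_D2 huP
  have hP22 : ContDiff ℝ (⊤ : ℕ∞) (D2 (D2 P)) := contDiff_D2 hP2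
  -- translation of slice derivatives
  have hsl1 : ∀ y θ : ℝ, deriv (fun s => u s θ) y = D1 P (y, θ) :=
    fun y θ => deriv_slice1 huP y θ
  have hsl1f : ∀ θ : ℝ, deriv (fun s => u s θ) = fun s => D1 P (s, θ) :=
    fun θ => funext fun y => hsl1 y θ
  have hsl11 : ∀ y θ : ℝ, deriv (deriv (fun s => u s θ)) y = D1 (D1 P) (y, θ) := by
    intro y θ
    rw [hsl1f θ]
    exact deriv_slice1 hP1 y θ
  have hsl2 : ∀ y θ : ℝ, deriv (fun t => u y t) θ = D2 P (y, θ) :=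
    fun y θ => deriv_slice2 huP y θ
  have hsl2f : ∀ y : ℝ, deriv (fun t => u y t) = fun t => D2 P (y, t) :=
    fun y => funext fun θ => hsl2 y θ
  have hsl22 : ∀ y θ : ℝ, deriv (deriv (fun t => u y t)) θ = D2 (D2 P) (y, θ) := by
    intro y θ
    rw [hsl2f y]
    exact deriv_slice2 hP2 y θ
  -- eigen-equation in terms of D1/D2
  have heig' : ∀ p : ℝ × ℝ,
      D1 (D1 P) p - p.1 / 2 * D1 P p + 1 / 2 * D2 (D2 P) p = (lam - 1 / 2) * P p := by
    rintro ⟨y, θ⟩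
    have h := heig y θ
    rw [OU, hsl11 y θ, hsl1 y θ, hsl22 y θ] at h
    show D1 (D1 P) (y, θ) - y / 2 * D1 P (y, θ) + 1 / 2 * D2 (D2 P) (y, θ)
      = (lam - 1 / 2) * u y θ
    linarith
  -- differentiate the eigen-equation in y
  have hpdeV : ∀ p : ℝ × ℝ, D1 (D1 (D1 P)) p - p.1 / 2 * D1 (D1 P) p
      + 1 / 2 * D2 (D2 (D1 P)) p = lam * D1 P p := by
    rintro ⟨y, θ⟩
    have h1 : HasDerivAt (fun s => D1 (D1 P) (s, θ)) (D1 (D1 (D1 P)) (y, θ)) y :=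
      hasDerivAt_slice1 hP11 y θ
    have h2 : HasDerivAt (fun s : ℝ => s / 2 * D1 P (s, θ))
        (1 / 2 * D1 P (y, θ) + y / 2 * D1 (D1 P) (y, θ)) y := by
      have ha : HasDerivAt (fun s : ℝ => s / 2) (1 / 2) y := (hasDerivAt_id y).div_const 2
      have hb := hasDerivAt_slice1 hP1 y θ
      have := ha.fun_mul hb
      convert this using 1 <;> ring
    have h3 : HasDerivAt (fun s : ℝ => 1 / 2 * D2 (D2 P) (s, θ))
        (1 / 2 * D1 (D2 (D2 P)) (y, θ)) y :=
      (hasDerivAt_slice1 hP22 y θ).const_mul (1/2)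
    have h4 : HasDerivAt (fun s : ℝ => (lam - 1 / 2) * P (s, θ))
        ((lam - 1 / 2) * D1 P (y, θ)) y :=
      (hasDerivAt_slice1 huP y θ).const_mul (lam - 1/2)
    have hcomb := (h1.fun_sub h2).fun_add h3
    have hfun : (fun s : ℝ => D1 (D1 P) (s, θ) - s / 2 * D1 P (s, θ)
        + 1 / 2 * D2 (D2 P) (s, θ)) = fun s : ℝ => (lam - 1 / 2) * P (s, θ) :=
      funext fun s => heig' (s, θ)
    rw [hfun] at hcomb
    have hder : D1 (D1 (D1 P)) (y, θ)
        - (1 / 2 * D1 P (y, θ) + y / 2 * D1 (D1 P) (y, θ))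
        + 1 / 2 * D1 (D2 (D2 P)) (y, θ) = (lam - 1 / 2) * D1 P (y, θ) :=
      hcomb.unique h4
    -- commute the mixed partial derivatives
    have hc1 : D1 (D2 (D2 P)) = D2 (D1 (D2 P)) := D_comm hP2
    have hc2 : D2 (D1 (D2 P)) = D2 (D2 (D1 P)) := congrArg D2 (D_comm huP)
    rw [hc1, hc2] at hder
    show D1 (D1 (D1 P)) (y, θ) - y / 2 * D1 (D1 P) (y, θ)
      + 1 / 2 * D2 (D2 (D1 P)) (y, θ) = lam * D1 P (y, θ)
    linarith
  -- periodicity of D1 P in θ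
  have hperV : ∀ y θ : ℝ, D1 P (y, θ + 2 * π) = D1 P (y, θ) := by
    intro y θ
    have hfun : (fun s : ℝ => P (s, θ + 2 * π)) = fun s : ℝ => P (s, θ) :=
      funext fun s => hper s θ
    rw [← deriv_slice1 huP y (θ + 2 * π), ← deriv_slice1 huP y θ, hfun]
  -- square integrability of D1 P and D1 (D1 P)
  have hL2V : IntegrableOn (fun p : ℝ × ℝ => (D1 P p) ^ 2 * Real.exp (-(p.1 ^ 2) / 4))
      (Set.univ ×ˢ Set.Icc 0 (2 * π)) volume := by
    have he : (fun p : ℝ × ℝ => (deriv (fun s => u s p.2) p.1) ^ 2 * Real.exp (-(p.1 ^ 2) / 4))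
        = fun p : ℝ × ℝ => (D1 P p) ^ 2 * Real.exp (-(p.1 ^ 2) / 4) := by
      funext p
      rw [hsl1 p.1 p.2]
    have h := hL2y
    rw [gaussL2] at h
    rwa [he] at h
  have hL2Vy : IntegrableOn (fun p : ℝ × ℝ => (D1 (D1 P) p) ^ 2 * Real.exp (-(p.1 ^ 2) / 4))
      (Set.univ ×ˢ Set.Icc 0 (2 * π)) volume := by
    have he : (fun p : ℝ × ℝ =>
          (deriv (deriv (fun s => u s p.2)) p.1) ^ 2 * Real.exp (-(p.1 ^ 2) / 4))
        = fun p : ℝ × ℝ => (D1 (D1 P) p) ^ 2 * Real.exp (-(p.1 ^ 2) / 4) := by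
      funext p
      rw [hsl11 p.1 p.2]
    have h := hL2yy
    rw [gaussL2] at h
    rwa [he] at h
  -- Step A : the y-derivative vanishes identically
  have hvz : ∀ p : ℝ × ℝ, D1 P p = 0 :=
    stepA (D1 P) lam hP1 hperV hL2V hL2Vy hlam hpdeV
  -- hence u does not depend on y
  have hconsty : ∀ y θ : ℝ, u y θ = u 0 θ := by
    intro y θ
    have hdiff : Differentiable ℝ (fun s => u s θ) :=
      fun s => (hasDerivAt_slice1 huP s θ).differentiableAt
    have hz : ∀ s : ℝ, deriv (fun s => u s θ) s = 0 :=
      fun s => (hsl1 s θ).trans (hvz (s, θ))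
    exact is_const_of_deriv_eq_zero hdiff hz y 0
  -- the θ-profile
  set f : ℝ → ℝ := u 0 with hf
  have hfc : ContDiff ℝ (⊤ : ℕ∞) f := by
    have hline : ContDiff ℝ (⊤ : ℕ∞) (fun t : ℝ => ((0:ℝ), t)) := contDiff_const.prodMk contDiff_id
    exact huP.comp hline
  have hfper : Function.Periodic f (2 * π) := hper 0
  have hode : ∀ θ : ℝ, deriv (deriv f) θ = (2 * lam - 1) * f θ := by
    intro θ
    have h := heig 0 θ
    rw [OU] at h
    have e1 : deriv (fun s => u s θ) 0 = 0 := (hsl1 0 θ).trans (hvz (0, θ))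
    have e2 : deriv (deriv (fun s => u s θ)) 0 = 0 := by
      rw [hsl1f θ]
      have : (fun s : ℝ => D1 P (s, θ)) = fun _ : ℝ => (0:ℝ) :=
        funext fun s => hvz (s, θ)
      rw [this, deriv_const]
    rw [e1, e2] at h
    have : deriv (deriv (fun t => u 0 t)) θ = deriv (deriv f) θ := rfl
    rw [this] at h
    show deriv (deriv f) θ = (2 * lam - 1) * u 0 θ
    linarith
  obtain ⟨y₀, θ₀, hneu⟩ := hne
  have hfne : f θ₀ ≠ 0 := by
    have := hconsty y₀ θ₀
    rw [this] at hneu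
    exact hneu
  rcases lt_trichotomy (2 * lam - 1) 0 with hc | hc | hc
  · exfalso
    have hc1 : (-1:ℝ) < 2 * lam - 1 := by linarith
    exact hfne (ode_neg hc1 hc hfc hfper hode θ₀)
  · have hlam12 : lam = 1 / 2 := by linarith
    refine ⟨hlam12, f 0, ?_, ?_⟩
    · have hz : ∀ x, deriv (deriv f) x = 0 := by
        intro x; rw [hode x, hc]; ring
      intro hf0
      exact hfne ((ode_zero hfc hfper hz θ₀).trans hf0)
    · intro y θ
      have hz : ∀ x, deriv (deriv f) x = 0 := by
        intro x; rw [hode x, hc]; ring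
      rw [hconsty y θ]
      exact ode_zero hfc hfper hz θ
  · exfalso
    exact hfne (ode_pos hc hfc hfper hode θ₀)
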